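/- arXiv:2401.13971 — 2 statements merged into one kernel-verified Lean document; each statement's English description precedes it below -/
import Mathlib

section
/- Tail bound for convex stochastic optimization under generalized Lipschitz continuity: Run x^{k+1} = argmin_x { f_{x^k}(x,ξ^k) + ω(x) + (γ_k/2)‖x − x^k‖² } with i.i.d. samples ξ^k ∼ Ξ and γ_k = α(𝒢(‖x^k‖) + 1)√K, α > 0. Then for any optimal solution x* of min ψ, every a > 0, and every 2 ≤ k ≤ K, P{ ‖x^k − x*‖ ≥ 2(L_f + L_ω)/(α√K) + a } ≤ 2Δ/a, where Δ = ‖x¹ − x*‖ + (L_f + L_ω)/α. -/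
/-!
Each iterate is a proximal point of the convex function `fmod xᵏ · ξᵏ + w` with parameter
`γ = α(𝒢(‖xᵏ‖) + 1)√K`, so the three-point inequality together with the Lipschitz bound
`ℓ = L_f(ξᵏ)𝒢(‖xᵏ‖) + L_ω` of that function `Φ` gives
`‖xᵏ⁺¹ - x*‖² ≤ ‖xᵏ - x*‖² + (2/γ)(Φ x* - Φ xᵏ) + ℓ²/γ²`.
Averaging over the fresh sample `ξᵏ` kills the middle term (the model is exact at `xᵏ` and lies
below `f`), and the factor `𝒢(‖xᵏ‖) + 1` in `γ` makes `E ℓ²/γ² ≤ (L_f + L_ω)²/(α²K)` whatever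
`xᵏ` is. After at most `K` steps `E‖xᵏ - x*‖² ≤ Δ²`, so `E‖xᵏ - x*‖ ≤ Δ` and Markov's inequality
concludes.
-/

open MeasureTheory Set Filter Topology

section Prox

variable {E : Type*} [NormedAddCommGroup E] [InnerProductSpace ℝ E]

def IsProxPoint (φ : E → ℝ) (γ : ℝ) (x p : E) : Prop :=
  ∀ y, φ p + γ / 2 * ‖p - x‖ ^ 2 ≤ φ y + γ / 2 * ‖y - x‖ ^ 2

variable {φ : E → ℝ} {γ : ℝ} {x p : E}

theorem IsProxPoint.le_add_inner (h : IsProxPoint φ γ x p) (hφ : ConvexOn ℝ univ φ) (y : E) :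
    φ p + γ * inner ℝ (x - p) (y - p) ≤ φ y := by
  have hsegment : ∀ t ∈ Ioc (0 : ℝ) 1,
      φ p + γ * inner ℝ (x - p) (y - p) ≤ φ y + γ / 2 * t * ‖y - p‖ ^ 2 := by
    rintro t ⟨ht0, ht1⟩
    have hmin := h ((1 - t) • p + t • y)
    have hconv : φ ((1 - t) • p + t • y) ≤ (1 - t) * φ p + t * φ y :=
      hφ.2 (mem_univ _) (mem_univ _) (by linarith) ht0.le (by ring)
    have hexpand : ‖(1 - t) • p + t • y - x‖ ^ 2
        = ‖p - x‖ ^ 2 - 2 * t * inner ℝ (x - p) (y - p) + t ^ 2 * ‖y - p‖ ^ 2 := by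
      rw [show (1 - t) • p + t • y - x = (p - x) + t • (y - p) by module, norm_add_sq_real,
        inner_smul_right, norm_smul, Real.norm_of_nonneg ht0.le, ← neg_sub x p, inner_neg_left]
      ring
    rw [hexpand] at hmin
    nlinarith
  have hlim : Tendsto (fun t : ℝ => φ y + γ / 2 * t * ‖y - p‖ ^ 2) (𝓝[>] 0) (𝓝 (φ y)) := by
    have : Continuous (fun t : ℝ => φ y + γ / 2 * t * ‖y - p‖ ^ 2) := by fun_prop
    simpa using (this.tendsto 0).mono_left nhdsWithin_le_nhds
  exact ge_of_tendsto hlim (eventually_of_mem (Ioc_mem_nhdsGT one_pos) hsegment)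

theorem IsProxPoint.norm_sub_sq_le (h : IsProxPoint φ γ x p) (hφ : ConvexOn ℝ univ φ)
    (hγ : 0 < γ) {ℓ : ℝ} (hℓ : φ x - φ p ≤ ℓ * ‖p - x‖) (z : E) :
    ‖p - z‖ ^ 2 ≤ ‖x - z‖ ^ 2 + 2 / γ * (φ z - φ x) + ℓ ^ 2 / γ ^ 2 := by
  have hvar := h.le_add_inner hφ z
  have hpolar : ‖x - z‖ ^ 2 = ‖p - x‖ ^ 2 - 2 * inner ℝ (x - p) (z - p) + ‖p - z‖ ^ 2 := by
    rw [norm_sub_rev p x, norm_sub_rev p z, ← norm_sub_sq_real, sub_sub_sub_cancel_right]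
  have hyoung : ℓ * ‖p - x‖ - γ / 2 * ‖p - x‖ ^ 2 ≤ ℓ ^ 2 / (2 * γ) := by
    rw [le_div_iff₀ (by positivity)]
    nlinarith [sq_nonneg (γ * ‖p - x‖ - ℓ)]
  have hscaled : γ * ‖p - z‖ ^ 2 ≤ γ * (‖x - z‖ ^ 2 + 2 / γ * (φ z - φ x) + ℓ ^ 2 / γ ^ 2) := by
    have e1 : γ * (2 / γ * (φ z - φ x)) = 2 * (φ z - φ x) := by field_simp
    have e2 : γ * (ℓ ^ 2 / γ ^ 2) = 2 * (ℓ ^ 2 / (2 * γ)) := by field_simp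
    rw [mul_add, mul_add, e1, e2]
    nlinarith
  exact le_of_mul_le_mul_left hscaled hγ

end Prox

section StochasticProx

variable {E : Type*} [NormedAddCommGroup E] [InnerProductSpace ℝ E]
  {S : Type*} [MeasurableSpace S] {μ : Measure S} [IsProbabilityMeasure μ]

theorem lintegral_norm_sub_sq_le_of_isProxPoint {Φ : E → S → ℝ} {γ : ℝ} {x z : E}
    {P : S → E} {ℓ : S → ℝ} (hprox : ∀ s, IsProxPoint (Φ · s) γ x (P s))
    (hconv : ∀ s, ConvexOn ℝ univ (Φ · s)) (hγ : 0 < γ)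
    (hℓ : ∀ s, Φ x s - Φ (P s) s ≤ ℓ s * ‖P s - x‖)
    (hx : Integrable (Φ x) μ) (hz : Integrable (Φ z) μ) (hℓ2 : Integrable (fun s => ℓ s ^ 2) μ)
    (hmean : ∫ s, Φ z s ∂μ ≤ ∫ s, Φ x s ∂μ) :
    ∫⁻ s, ENNReal.ofReal (‖P s - z‖ ^ 2) ∂μ
      ≤ ENNReal.ofReal (‖x - z‖ ^ 2 + (∫ s, ℓ s ^ 2 ∂μ) / γ ^ 2) := by
  set R : S → ℝ := fun s => ‖x - z‖ ^ 2 + 2 / γ * (Φ z s - Φ x s) + ℓ s ^ 2 / γ ^ 2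
  have hpath : ∀ s, ‖P s - z‖ ^ 2 ≤ R s := fun s =>
    (hprox s).norm_sub_sq_le (hconv s) hγ (hℓ s) z
  have hR : Integrable R μ :=
    ((integrable_const _).add ((hz.sub hx).const_mul _)).add (hℓ2.div_const _)
  have hintR : ∫ s, R s ∂μ = ‖x - z‖ ^ 2 + 2 / γ * (∫ s, Φ z s ∂μ - ∫ s, Φ x s ∂μ)
      + (∫ s, ℓ s ^ 2 ∂μ) / γ ^ 2 := by
    simp only [R]
    rw [integral_add (by fun_prop) (by fun_prop), integral_add (by fun_prop) (by fun_prop),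
      integral_const_mul, integral_sub hz hx, integral_div, integral_const, probReal_univ,
      one_smul]
  calc ∫⁻ s, ENNReal.ofReal (‖P s - z‖ ^ 2) ∂μ ≤ ∫⁻ s, ENNReal.ofReal (R s) ∂μ :=
        lintegral_mono fun s => ENNReal.ofReal_le_ofReal (hpath s)
    _ = ENNReal.ofReal (∫ s, R s ∂μ) :=
        (ofReal_integral_eq_lintegral_ofReal hR
          (Eventually.of_forall fun s => (sq_nonneg _).trans (hpath s))).symm
    _ ≤ _ := by
        refine ENNReal.ofReal_le_ofReal ?_
        rw [hintR]
        have : 2 / γ * (∫ s, Φ z s ∂μ - ∫ s, Φ x s ∂μ) ≤ 0 :=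
          mul_nonpos_of_nonneg_of_nonpos (by positivity) (by linarith)
        linarith

end StochasticProx

section Moments

variable {Ω : Type*} [MeasurableSpace Ω] {μ : Measure Ω}

theorem memLp_two_of_nonneg_of_integrable_sq {Z : Ω → ℝ} (h0 : ∀ ω, 0 ≤ Z ω)
    (hZ : Integrable (fun ω => Z ω ^ 2) μ) : MemLp Z 2 μ := by
  refine (memLp_two_iff_integrable_sq ?_).2 hZ
  simpa only [Real.sqrt_sq (h0 _)] using Real.continuous_sqrt.comp_aestronglyMeasurable hZ.1

variable [IsProbabilityMeasure μ]

theorem sq_integral_le_integral_sq {Z : Ω → ℝ} (hZ : MemLp Z 2 μ) :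
    (∫ ω, Z ω ∂μ) ^ 2 ≤ ∫ ω, Z ω ^ 2 ∂μ := by
  have := ProbabilityTheory.variance_nonneg Z μ
  rw [ProbabilityTheory.variance_eq_sub hZ] at this
  simpa using this

theorem integral_mul_add_sq_le {Z : Ω → ℝ} (hZ : MemLp Z 2 μ) {a b M : ℝ} (ha : 0 ≤ a)
    (hb : 0 ≤ b) (hM : 0 ≤ M) (hZM : ∫ ω, Z ω ^ 2 ∂μ ≤ M ^ 2) :
    ∫ ω, (a * Z ω + b) ^ 2 ∂μ ≤ (a * M + b) ^ 2 := by
  have hZ1 : Integrable Z μ := hZ.integrable one_le_two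
  have hmean : ∫ ω, Z ω ∂μ ≤ M :=
    abs_le_of_sq_le_sq' ((sq_integral_le_integral_sq hZ).trans hZM) hM |>.2
  have hexpand : ∫ ω, (a * Z ω + b) ^ 2 ∂μ
      = a ^ 2 * ∫ ω, Z ω ^ 2 ∂μ + 2 * a * b * ∫ ω, Z ω ∂μ + b ^ 2 := by
    have h2 : Integrable (fun ω => Z ω ^ 2) μ := hZ.integrable_sq
    simp_rw [add_sq, mul_pow]
    rw [integral_add (by fun_prop) (by fun_prop), integral_add (by fun_prop) (by fun_prop),
      integral_const_mul, integral_mul_const, integral_const_mul, integral_const_mul,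
      integral_const, probReal_univ, one_smul]
    ring
  rw [hexpand]
  have hsq := mul_le_mul_of_nonneg_left hZM (sq_nonneg a)
  have hlin := mul_le_mul_of_nonneg_left hmean (by positivity : 0 ≤ 2 * a * b)
  linarith

theorem sq_lintegral_le_lintegral_sq {f : Ω → ENNReal} (hf : AEMeasurable f μ) :
    (∫⁻ ω, f ω ∂μ) ^ 2 ≤ ∫⁻ ω, f ω ^ 2 ∂μ := by
  have hholder := ENNReal.lintegral_mul_le_Lp_mul_Lq μ Real.HolderConjugate.two_two hf
    aemeasurable_const (g := 1)
  simp only [Pi.mul_apply, Pi.one_apply, mul_one, lintegral_const,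
    measure_univ, ENNReal.rpow_two, one_pow, ENNReal.one_rpow] at hholder
  calc (∫⁻ ω, f ω ∂μ) ^ 2 ≤ ((∫⁻ ω, f ω ^ 2 ∂μ) ^ (1 / 2 : ℝ)) ^ 2 := by gcongr
    _ = ∫⁻ ω, f ω ^ 2 ∂μ := by
        rw [← ENNReal.rpow_natCast, ← ENNReal.rpow_mul]
        norm_num

theorem meas_ge_le_ofReal_div_of_lintegral_sq_le {Y : Ω → ℝ} (hY : AEMeasurable Y μ)
    {a D : ℝ} (ha : 0 < a) (hD : 0 ≤ D)
    (h : ∫⁻ ω, ENNReal.ofReal (Y ω ^ 2) ∂μ ≤ ENNReal.ofReal (D ^ 2)) :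
    μ {ω | a ≤ Y ω} ≤ ENNReal.ofReal (D / a) := by
  have hY' : AEMeasurable (fun ω => ENNReal.ofReal (Y ω)) μ :=
    ENNReal.measurable_ofReal.comp_aemeasurable hY
  have hmean : ∫⁻ ω, ENNReal.ofReal (Y ω) ∂μ ≤ ENNReal.ofReal D := by
    have hsq : (∫⁻ ω, ENNReal.ofReal (Y ω) ∂μ) ^ 2 ≤ ENNReal.ofReal D ^ 2 := calc
      _ ≤ ∫⁻ ω, ENNReal.ofReal (Y ω) ^ 2 ∂μ := sq_lintegral_le_lintegral_sq hY'
      _ ≤ ∫⁻ ω, ENNReal.ofReal (Y ω ^ 2) ∂μ := lintegral_mono fun ω => by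
          rcases le_total 0 (Y ω) with hy | hy
          · rw [ENNReal.ofReal_pow hy]
          · simp [ENNReal.ofReal_of_nonpos hy]
      _ ≤ ENNReal.ofReal D ^ 2 := by rwa [← ENNReal.ofReal_pow hD]
    exact (ENNReal.pow_le_pow_left_iff two_ne_zero).1 hsq
  calc μ {ω | a ≤ Y ω} ≤ μ {ω | ENNReal.ofReal a ≤ ENNReal.ofReal (Y ω)} :=
        measure_mono fun ω hω => ENNReal.ofReal_le_ofReal hω
    _ ≤ (∫⁻ ω, ENNReal.ofReal (Y ω) ∂μ) / ENNReal.ofReal a :=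
        meas_ge_le_lintegral_div hY' (by simpa using ha) ENNReal.ofReal_ne_top
    _ ≤ ENNReal.ofReal D / ENNReal.ofReal a := by gcongr
    _ = ENNReal.ofReal (D / a) := (ENNReal.ofReal_div_of_pos ha).symm

end Moments

section AdaptiveStep

variable {E : Type*} [NormedAddCommGroup E] [InnerProductSpace ℝ E]
  {S : Type*} [MeasurableSpace S] {μ : Measure S} [IsProbabilityMeasure μ]

/- Here `g` plays `𝒢(‖x‖)` and `β` plays `√K`; the factor `g + 1` in the step size cancels the
growth `g` of the Lipschitz constant of `φ`, so the bound does not depend on `x`. -/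
theorem lintegral_norm_sub_sq_le_of_isProxPoint_adaptive {φ : E → S → ℝ} {w : E → ℝ} {ℓ : S → ℝ}
    {g Lf Lw α β : ℝ} {x z : E} {P : S → E}
    (hprox : ∀ s, IsProxPoint (fun y => φ y s + w y) (α * (g + 1) * β) x (P s))
    (hφ_conv : ∀ s, ConvexOn ℝ univ (φ · s)) (hw_conv : ConvexOn ℝ univ w)
    (hφ_lip : ∀ y y' s, φ y s - φ y' s ≤ ℓ s * g * ‖y - y'‖)
    (hw_lip : ∀ y y', |w y - w y'| ≤ Lw * ‖y - y'‖) (hφ_int : ∀ y, Integrable (φ y) μ)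
    (hmean : ∫ s, φ z s ∂μ + w z ≤ ∫ s, φ x s ∂μ + w x)
    (hℓ : MemLp ℓ 2 μ) (hℓ_bound : ∫ s, ℓ s ^ 2 ∂μ ≤ Lf ^ 2)
    (hg : 0 ≤ g) (hα : 0 < α) (hβ : 0 < β) (hLf : 0 ≤ Lf) (hLw : 0 ≤ Lw) :
    ∫⁻ s, ENNReal.ofReal (‖P s - z‖ ^ 2) ∂μ
      ≤ ENNReal.ofReal (‖x - z‖ ^ 2 + ((Lf + Lw) / α / β) ^ 2) := by
  have hγ : 0 < α * (g + 1) * β := by positivity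
  have hlip : ∀ s, φ x s + w x - (φ (P s) s + w (P s)) ≤ (g * ℓ s + Lw) * ‖P s - x‖ := by
    intro s
    have hφs := hφ_lip x (P s) s
    have hws := (le_abs_self _).trans (hw_lip x (P s))
    rw [norm_sub_rev] at hφs hws
    linarith
  have hℓ' : MemLp (fun s => g * ℓ s + Lw) 2 μ := (hℓ.const_mul g).add (memLp_const Lw)
  have hstep := lintegral_norm_sub_sq_le_of_isProxPoint (Φ := fun y s => φ y s + w y) hprox
    (fun s => (hφ_conv s).add hw_conv) hγ hlip ((hφ_int x).add (integrable_const _))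
    ((hφ_int z).add (integrable_const _)) hℓ'.integrable_sq
    (by rwa [integral_add (hφ_int z) (integrable_const _), integral_add (hφ_int x)
      (integrable_const _), integral_const, integral_const, probReal_univ, one_smul, one_smul])
  have hnoise : (∫ s, (g * ℓ s + Lw) ^ 2 ∂μ) / (α * (g + 1) * β) ^ 2
      ≤ ((Lf + Lw) / α / β) ^ 2 := calc
    _ ≤ (g * Lf + Lw) ^ 2 / (α * (g + 1) * β) ^ 2 := by
        gcongr
        exact integral_mul_add_sq_le hℓ hg hLw hLf hℓ_bound
    _ ≤ ((g + 1) * (Lf + Lw)) ^ 2 / (α * (g + 1) * β) ^ 2 := by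
        gcongr
        nlinarith
    _ = ((Lf + Lw) / α / β) ^ 2 := by
        field_simp
  exact hstep.trans (ENNReal.ofReal_le_ofReal (by linarith))

end AdaptiveStep

section Product

variable {δ : Type*} [Fintype δ] [DecidableEq δ] {X : δ → Type*} [∀ i, MeasurableSpace (X i)]
  {μ : ∀ i, Measure (X i)} [∀ i, IsProbabilityMeasure (μ i)]

theorem lintegral_pi_le_of_lintegral_update_le {f g : (∀ i, X i) → ENNReal} (i : δ)
    (hf : Measurable f) (hg : Measurable g) (hgi : ∀ x s, g (Function.update x i s) = g x)
    (hfg : ∀ x, ∫⁻ s, f (Function.update x i s) ∂μ i ≤ g x) :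
    ∫⁻ x, f x ∂Measure.pi μ ≤ ∫⁻ x, g x ∂Measure.pi μ := by
  refine lintegral_le_of_lmarginal_le {i} hf hg fun x => ?_
  simp only [lmarginal_singleton, hgi, lintegral_const, measure_univ, mul_one]
  exact hfg x

end Product

theorem le_add_nsmul_of_succ_le_add {α : Type*} [AddCommMonoid α] [PartialOrder α]
    [IsOrderedAddMonoid α] {u : ℕ → α} {c : α} {K : ℕ} (h : ∀ j < K, u (j + 1) ≤ u j + c) :
    ∀ k ≤ K, u k ≤ u 0 + k • c := by
  intro k hk
  induction k with
  | zero => simp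
  | succ j ih =>
    calc u (j + 1) ≤ u j + c := h j hk
      _ ≤ u 0 + j • c + c := by gcongr; exact ih (Nat.le_of_succ_le hk)
      _ = u 0 + (j + 1) • c := by rw [succ_nsmul, add_assoc]

theorem lintegral_pi_le_add_nsmul_of_lintegral_update_le {S : Type*} [MeasurableSpace S]
    {μ : Measure S} [IsProbabilityMeasure μ] {K : ℕ} {V : ℕ → (Fin K → S) → ENNReal}
    {c : ENNReal} (hV : ∀ j, Measurable (V j))
    (hV_indep : ∀ j (hj : j < K) ω s, V j (Function.update ω ⟨j, hj⟩ s) = V j ω)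
    (hV_succ : ∀ j (hj : j < K) ω, ∫⁻ s, V (j + 1) (Function.update ω ⟨j, hj⟩ s) ∂μ ≤ V j ω + c) :
    ∀ k ≤ K, ∫⁻ ω, V k ω ∂Measure.pi (fun _ => μ)
      ≤ ∫⁻ ω, V 0 ω ∂Measure.pi (fun _ => μ) + k • c := by
  refine le_add_nsmul_of_succ_le_add fun j hj => ?_
  calc ∫⁻ ω, V (j + 1) ω ∂Measure.pi (fun _ => μ)
      ≤ ∫⁻ ω, (V j ω + c) ∂Measure.pi (fun _ => μ) :=
        lintegral_pi_le_of_lintegral_update_le ⟨j, hj⟩ (hV _) ((hV j).add_const c)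
          (fun ω s => by rw [hV_indep]) (hV_succ j hj)
    _ = ∫⁻ ω, V j ω ∂Measure.pi (fun _ => μ) + c := by
        rw [lintegral_add_right _ measurable_const, lintegral_const, measure_univ, mul_one]

theorem ofReal_sq_add_nsmul_le_ofReal_add_sq {r B : ℝ} (hr : 0 ≤ r) (hB : 0 ≤ B) {k K : ℕ}
    (hk : k ≤ K) :
    ENNReal.ofReal (r ^ 2) + k • ENNReal.ofReal ((B / Real.sqrt K) ^ 2)
      ≤ ENNReal.ofReal ((r + B) ^ 2) := by
  rw [nsmul_eq_mul, ← ENNReal.ofReal_natCast, ← ENNReal.ofReal_mul (Nat.cast_nonneg _),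
    ← ENNReal.ofReal_add (sq_nonneg _) (by positivity)]
  refine ENNReal.ofReal_le_ofReal ?_
  have hnoise : k * (B / Real.sqrt K) ^ 2 ≤ B ^ 2 := by
    rw [div_pow, Real.sq_sqrt (Nat.cast_nonneg _)]
    calc (k : ℝ) * (B ^ 2 / K) ≤ K * (B ^ 2 / K) := by gcongr
      _ ≤ B ^ 2 := by
        rcases K.eq_zero_or_pos with rfl | hK
        · simp [sq_nonneg]
        · rw [mul_div_cancel₀ _ (by positivity)]
  nlinarith [mul_nonneg hr hB]

theorem convex_tail_bound_generalized_lipschitz_general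
    {n : ℕ} {S : Type*} [MeasurableSpace S] (μ : Measure S) [IsProbabilityMeasure μ]
    (f w ψ : EuclideanSpace ℝ (Fin n) → ℝ)
    (fmod : EuclideanSpace ℝ (Fin n) → EuclideanSpace ℝ (Fin n) → S → ℝ)
    (Lfs : S → ℝ) (G : ℝ → ℝ) (Lf Lw α : ℝ)
    -- basic parameter assumptions
    (hα : 0 < α) (hLf : 0 ≤ Lf) (hLw : 0 ≤ Lw)
    -- convex composite objective
    (hψdef : ∀ x, ψ x = f x + w x)
    (hw_conv : ConvexOn ℝ Set.univ w)
    (hw_lip : ∀ x y, |w x - w y| ≤ Lw * ‖x - y‖)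
    -- properties of the stochastic model (with τ = 0)
    (hmodel_conv : ∀ x s, ConvexOn ℝ Set.univ (fun y => fmod x y s))
    (hmodel_int : ∀ x y, Integrable (fun s => fmod x y s) μ)
    (hmodel_center : ∀ x, ∫ s, fmod x x s ∂μ = f x)
    (hmodel_under : ∀ x y, ∫ s, fmod x y s ∂μ ≤ f y)
    -- C1: generalized Lipschitz continuity with growth function 𝒢
    (hG_nonneg : ∀ t, 0 ≤ G t)
    (hC1 : ∀ x y z s, fmod x y s - fmod x z s ≤ Lfs s * G ‖x‖ * ‖y - z‖)
    (hLfs_nonneg : ∀ s, 0 ≤ Lfs s)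
    (hLfs_int : Integrable (fun s => Lfs s ^ 2) μ)
    (hLfs_bound : ∫ s, Lfs s ^ 2 ∂μ ≤ Lf ^ 2)
    -- an optimal solution
    (xstar : EuclideanSpace ℝ (Fin n)) (hxstar : ∀ y, ψ xstar ≤ ψ y)
    -- the algorithm with adaptive stepsize `γ_k = α(𝒢(‖x^k‖)+1)√K`
    (K : ℕ)
    (X : ℕ → (Fin K → S) → EuclideanSpace ℝ (Fin n))
    (x1 : EuclideanSpace ℝ (Fin n)) (hX0 : ∀ ω, X 0 ω = x1)
    (hXmeas : ∀ k, Measurable (X k))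
    (hXadapt : ∀ k, ∀ ω ω' : Fin K → S,
      (∀ i : Fin K, (i : ℕ) < k → ω i = ω' i) → X k ω = X k ω')
    (hupdate : ∀ k (hk : k < K) (ω : Fin K → S) (y : EuclideanSpace ℝ (Fin n)),
      fmod (X k ω) (X (k + 1) ω) (ω ⟨k, hk⟩) + w (X (k + 1) ω)
          + α * (G ‖X k ω‖ + 1) * Real.sqrt K / 2 * ‖X (k + 1) ω - X k ω‖ ^ 2
        ≤ fmod (X k ω) y (ω ⟨k, hk⟩) + w y
          + α * (G ‖X k ω‖ + 1) * Real.sqrt K / 2 * ‖y - X k ω‖ ^ 2) :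
    ∀ a : ℝ, 0 < a → ∀ k : ℕ, 1 ≤ k → k < K →
      (Measure.pi fun _ : Fin K => μ)
          {ω | 2 * (Lf + Lw) / (α * Real.sqrt K) + a ≤ ‖X k ω - xstar‖}
        ≤ ENNReal.ofReal (2 * (‖x1 - xstar‖ + (Lf + Lw) / α) / a) := by
  intro a ha k _ hkK
  have hK : (0 : ℝ) < K := by exact_mod_cast Nat.zero_lt_of_lt hkK
  have hLfs : MemLp Lfs 2 μ := memLp_two_of_nonneg_of_integrable_sq hLfs_nonneg hLfs_int
  have hmean : ∀ x, ∫ s, fmod x xstar s ∂μ + w xstar ≤ ∫ s, fmod x x s ∂μ + w x := fun x => by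
    linarith [hxstar x, hψdef x, hψdef xstar, hmodel_under x xstar, hmodel_center x]
  have hXj : ∀ j (hj : j < K) ω s, X j (Function.update ω ⟨j, hj⟩ s) = X j ω := fun j _ ω s =>
    hXadapt j _ _ fun i hi => Function.update_of_ne (Fin.ne_of_val_ne hi.ne) s ω
  have hmoment : ∫⁻ ω, ENNReal.ofReal (‖X k ω - xstar‖ ^ 2) ∂Measure.pi (fun _ => μ)
      ≤ ENNReal.ofReal ((‖x1 - xstar‖ + (Lf + Lw) / α) ^ 2) := by
    refine (lintegral_pi_le_add_nsmul_of_lintegral_update_le (μ := μ)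
      (V := fun j ω => ENNReal.ofReal (‖X j ω - xstar‖ ^ 2))
      (c := ENNReal.ofReal (((Lf + Lw) / α / Real.sqrt K) ^ 2)) (fun j => by fun_prop)
      (fun j hj ω s => by rw [hXj]) (fun j hj ω => ?_) k hkK.le).trans ?_
    · refine (lintegral_norm_sub_sq_le_of_isProxPoint_adaptive (φ := fmod (X j ω)) (fun s y => ?_)
        (hmodel_conv _) hw_conv (hC1 _) hw_lip (hmodel_int _) (hmean _) hLfs hLfs_bound
        (hG_nonneg _) hα (Real.sqrt_pos.2 hK) hLf hLw).trans ENNReal.ofReal_add_le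
      have h := hupdate j hj (Function.update ω ⟨j, hj⟩ s) y
      rwa [hXj, Function.update_self] at h
    · simpa only [hX0, lintegral_const, measure_univ, mul_one] using
        ofReal_sq_add_nsmul_le_ofReal_add_sq (norm_nonneg _) (by positivity) hkK.le
  calc (Measure.pi fun _ : Fin K => μ) {ω | 2 * (Lf + Lw) / (α * Real.sqrt K) + a ≤ ‖X k ω - xstar‖}
      ≤ (Measure.pi fun _ : Fin K => μ) {ω | a ≤ ‖X k ω - xstar‖} :=
        measure_mono <| ofPred_subset_ofPred.2 fun ω hω =>
          (le_add_of_nonneg_left (by positivity)).trans hω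
    _ ≤ ENNReal.ofReal ((‖x1 - xstar‖ + (Lf + Lw) / α) / a) :=
        meas_ge_le_ofReal_div_of_lintegral_sq_le (by fun_prop) ha (by positivity) hmoment
    _ ≤ ENNReal.ofReal (2 * (‖x1 - xstar‖ + (Lf + Lw) / α) / a) := by
        gcongr
        linarith [norm_nonneg (x1 - xstar), div_nonneg (add_nonneg hLf hLw) hα.le]

/-- **Lemma D.3** (tail bound for convex stochastic optimization under generalized
Lipschitz continuity).  The algorithm is run for `K` steps on the product space
`Fin K → S` with the i.i.d. product measure, with adaptive stepsize
`γ_k = α(𝒢(‖x^k‖)+1)√K`.  Then for every `a > 0` and every `2 ≤ k ≤ K`,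
`P{‖x^k - x*‖ ≥ 2(L_f+L_ω)/(α√K) + a} ≤ 2Δ/a`, where `Δ = ‖x¹-x*‖ + (L_f+L_ω)/α`. -/
theorem convex_tail_bound_generalized_lipschitz
    {n : ℕ} {S : Type*} [MeasurableSpace S] (μ : Measure S) [IsProbabilityMeasure μ]
    (f w ψ : EuclideanSpace ℝ (Fin n) → ℝ)
    (fmod : EuclideanSpace ℝ (Fin n) → EuclideanSpace ℝ (Fin n) → S → ℝ)
    (Lfs : S → ℝ) (G : ℝ → ℝ) (Lf Lw α : ℝ)
    -- basic parameter assumptions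
    (hα : 0 < α) (hLf : 0 ≤ Lf) (hLw : 0 ≤ Lw)
    -- convex composite objective
    (hψdef : ∀ x, ψ x = f x + w x)
    (hf_conv : ConvexOn ℝ Set.univ f)
    (hw_conv : ConvexOn ℝ Set.univ w)
    (hw_lip : ∀ x y, |w x - w y| ≤ Lw * ‖x - y‖)
    -- properties of the stochastic model (with τ = 0)
    (hmodel_conv : ∀ x s, ConvexOn ℝ Set.univ (fun y => fmod x y s))
    (hmodel_int : ∀ x y, Integrable (fun s => fmod x y s) μ)
    (hmodel_center : ∀ x, ∫ s, fmod x x s ∂μ = f x)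
    (hmodel_under : ∀ x y, ∫ s, fmod x y s ∂μ ≤ f y)
    -- C1: generalized Lipschitz continuity with growth function 𝒢
    (hG_nonneg : ∀ t, 0 ≤ G t) (hG_mono : Monotone G) (hG_cont : Continuous G)
    (hC1 : ∀ x y z s, fmod x y s - fmod x z s ≤ Lfs s * G ‖x‖ * ‖y - z‖)
    (hLfs_nonneg : ∀ s, 0 ≤ Lfs s)
    (hLfs_int : Integrable (fun s => Lfs s ^ 2) μ)
    (hLfs_bound : ∫ s, Lfs s ^ 2 ∂μ ≤ Lf ^ 2)
    -- an optimal solution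
    (xstar : EuclideanSpace ℝ (Fin n)) (hxstar : ∀ y, ψ xstar ≤ ψ y)
    -- the algorithm with adaptive stepsize `γ_k = α(𝒢(‖x^k‖)+1)√K`
    (K : ℕ) (hK : 1 ≤ K)
    (X : ℕ → (Fin K → S) → EuclideanSpace ℝ (Fin n))
    (x1 : EuclideanSpace ℝ (Fin n)) (hX0 : ∀ ω, X 0 ω = x1)
    (hXmeas : ∀ k, Measurable (X k))
    (hXadapt : ∀ k, ∀ ω ω' : Fin K → S,
      (∀ i : Fin K, (i : ℕ) < k → ω i = ω' i) → X k ω = X k ω')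
    (hupdate : ∀ k (hk : k < K) (ω : Fin K → S) (y : EuclideanSpace ℝ (Fin n)),
      fmod (X k ω) (X (k + 1) ω) (ω ⟨k, hk⟩) + w (X (k + 1) ω)
          + α * (G ‖X k ω‖ + 1) * Real.sqrt K / 2 * ‖X (k + 1) ω - X k ω‖ ^ 2
        ≤ fmod (X k ω) y (ω ⟨k, hk⟩) + w y
          + α * (G ‖X k ω‖ + 1) * Real.sqrt K / 2 * ‖y - X k ω‖ ^ 2)
    (hdint : ∀ k, Integrable (fun ω => ‖X k ω - xstar‖ ^ 2)
      (Measure.pi fun _ : Fin K => μ)) :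
    ∀ a : ℝ, 0 < a → ∀ k : ℕ, 1 ≤ k → k < K →
      (Measure.pi fun _ : Fin K => μ)
          {ω | 2 * (Lf + Lw) / (α * Real.sqrt K) + a ≤ ‖X k ω - xstar‖}
        ≤ ENNReal.ofReal (2 * (‖x1 - xstar‖ + (Lf + Lw) / α) / a) :=
  convex_tail_bound_generalized_lipschitz_general μ f w ψ fmod Lfs G Lf Lw α hα hLf hLw hψdef
    hw_conv hw_lip hmodel_conv hmodel_int hmodel_center hmodel_under hG_nonneg hC1 hLfs_nonneg
    hLfs_int hLfs_bound xstar hxstar K X x1 hX0 hXmeas hXadapt hupdate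
end

section
/- One-step contraction for convex stochastic optimization under unknown (sample-dependent) Lipschitz continuity: Let x ∈ ℝⁿ be fixed, let γ > 0 be deterministic (independent of the sample ξ), and let x⁺(ξ) = argmin_y { f_x(y,ξ) + ω(y) + (γ/2)‖y − x‖² } for ξ ∼ Ξ. Then for any optimal solution x* of min ψ, E_ξ[‖x⁺(ξ) − x*‖²] ≤ ‖x − x*‖² − (2/γ)[ψ(x) − ψ(x*)] + E_ξ[ (Lip(x,ξ) + L_ω)²/γ² ]. -/
/-!
For each sample the proximal objective `y ↦ f_x(y, ξ) + ω(y) + γ/2 ‖y - x‖²` is `γ`-strongly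
convex, so its minimizer `x⁺` obeys the three-point inequality: its value at `x⁺` plus
`γ/2 ‖z - x⁺‖²` is at most its value at any `z`. With `z = x*`, the descent from `x` to `x⁺`
is at most `(Lip(x, ξ) + L_ω) ‖x⁺ - x‖`, which Young's inequality absorbs into `γ/2 ‖x⁺ - x‖²`
at the cost `(Lip(x, ξ) + L_ω)² / (2γ)`. Taking expectations, `E f_x(x*, ξ) ≤ f(x*)` and
`E f_x(x, ξ) = f(x)` turn the model gap into `ψ(x*) - ψ(x)`.
-/

open MeasureTheory Set Filter Topology
open scoped RealInnerProductSpace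

section InnerProductSpace

variable {E : Type*} [NormedAddCommGroup E] [InnerProductSpace ℝ E]

lemma strongConvexOn_half_mul_norm_sub_sq (m : ℝ) (x : E) :
    StrongConvexOn univ m fun y ↦ m / 2 * ‖y - x‖ ^ 2 := by
  have hlin : ConvexOn ℝ univ fun y ↦ -(m * ⟪y, x⟫) :=
    (-(m • (innerₛₗ ℝ).flip x)).convexOn convex_univ
  refine strongConvexOn_iff_convex.2 <| (hlin.add_const (m / 2 * ‖x‖ ^ 2)).congr fun y _ ↦ ?_
  simp only [Pi.add_apply]
  rw [norm_sub_sq_real]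
  ring

lemma ConvexOn.strongConvexOn_add_half_mul_norm_sub_sq {g : E → ℝ} (hg : ConvexOn ℝ univ g)
    (m : ℝ) (x : E) : StrongConvexOn univ m fun y ↦ g y + m / 2 * ‖y - x‖ ^ 2 := by
  have h := (uniformConvexOn_zero.2 hg).add (strongConvexOn_half_mul_norm_sub_sq m x)
  rw [zero_add] at h
  exact h

lemma StrongConvexOn.add_half_mul_norm_sub_sq_le_of_isMinOn {s : Set E} {m : ℝ} {h : E → ℝ}
    (hh : StrongConvexOn s m h) {u : E} (hu : u ∈ s) (hmin : IsMinOn h s u) {z : E} (hz : z ∈ s) :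
    h u + m / 2 * ‖z - u‖ ^ 2 ≤ h z := by
  have hsegment : ∀ t ∈ Ioo (0 : ℝ) 1, h u ≤ h z - (1 - t) * (m / 2 * ‖z - u‖ ^ 2) := by
    rintro t ⟨ht0, ht1⟩
    have hmem := hh.1 hz hu ht0.le (sub_nonneg.2 ht1.le) (add_sub_cancel t 1)
    have hconv := hh.2 hz hu ht0.le (sub_nonneg.2 ht1.le) (add_sub_cancel t 1)
    simp only [smul_eq_mul] at hconv
    have hmin_t : h u ≤ h (t • z + (1 - t) • u) := hmin hmem
    refine le_of_mul_le_mul_left ?_ ht0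
    linarith
  have hlim : Tendsto (fun t : ℝ ↦ h z - (1 - t) * (m / 2 * ‖z - u‖ ^ 2)) (𝓝[>] 0)
      (𝓝 (h z - m / 2 * ‖z - u‖ ^ 2)) := by
    refine tendsto_nhdsWithin_of_tendsto_nhds ?_
    simpa using (by fun_prop : Continuous fun t : ℝ ↦
      h z - (1 - t) * (m / 2 * ‖z - u‖ ^ 2)).tendsto 0
  linarith [ge_of_tendsto hlim (mem_of_superset (Ioo_mem_nhdsGT one_pos) hsegment)]

lemma norm_sub_sq_le_of_isMinOn_prox {g : E → ℝ} (hg : ConvexOn ℝ univ g) {γ L : ℝ} (hγ : 0 < γ)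
    {x u : E} (hu : IsMinOn (fun y ↦ g y + γ / 2 * ‖y - x‖ ^ 2) univ u)
    (hdescent : g x - g u ≤ L * ‖u - x‖) (z : E) :
    ‖u - z‖ ^ 2 ≤ ‖x - z‖ ^ 2 + 2 / γ * (g z - g x) + L ^ 2 / γ ^ 2 := by
  have hthree := (hg.strongConvexOn_add_half_mul_norm_sub_sq γ x)
    |>.add_half_mul_norm_sub_sq_le_of_isMinOn (mem_univ u) hu (mem_univ z)
  have hyoung : L * ‖u - x‖ - γ / 2 * ‖u - x‖ ^ 2 ≤ L ^ 2 / (2 * γ) := by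
    rw [le_div_iff₀ (by positivity)]
    nlinarith [sq_nonneg (γ * ‖u - x‖ - L)]
  have hhalf : γ / 2 * ‖u - z‖ ^ 2 ≤ γ / 2 * ‖x - z‖ ^ 2 + (g z - g x) + L ^ 2 / (2 * γ) := by
    rw [norm_sub_rev u z, norm_sub_rev x z]
    linarith
  calc ‖u - z‖ ^ 2 = 2 / γ * (γ / 2 * ‖u - z‖ ^ 2) := by field_simp
    _ ≤ 2 / γ * (γ / 2 * ‖x - z‖ ^ 2 + (g z - g x) + L ^ 2 / (2 * γ)) := by gcongr
    _ = ‖x - z‖ ^ 2 + 2 / γ * (g z - g x) + L ^ 2 / γ ^ 2 := by field_simp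

end InnerProductSpace

lemma integrable_add_const_sq {S : Type*} [MeasurableSpace S] {μ : Measure S} [IsFiniteMeasure μ]
    {F : S → ℝ} (hF : AEStronglyMeasurable F μ) (hF_sq : Integrable (fun s ↦ F s ^ 2) μ) (c : ℝ) :
    Integrable (fun s ↦ (F s + c) ^ 2) μ :=
  (memLp_two_iff_integrable_sq (hF.add_const c)).1
    (((memLp_two_iff_integrable_sq hF).2 hF_sq).add (memLp_const c))

theorem convex_one_step_unknown_lipschitz_general
    {n : ℕ} {S : Type*} [MeasurableSpace S] (μ : Measure S) [IsProbabilityMeasure μ]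
    (f w ψ : EuclideanSpace ℝ (Fin n) → ℝ)
    (fmod : EuclideanSpace ℝ (Fin n) → EuclideanSpace ℝ (Fin n) → S → ℝ)
    (Lip : EuclideanSpace ℝ (Fin n) → S → ℝ) (γ Lw : ℝ)
    -- basic parameter assumptions
    (hγ : 0 < γ)
    -- convex composite objective
    (hψdef : ∀ x, ψ x = f x + w x)
    (hw_conv : ConvexOn ℝ Set.univ w)
    (hw_lip : ∀ x y, |w x - w y| ≤ Lw * ‖x - y‖)
    -- properties of the stochastic model (with τ = 0)
    (hmodel_conv : ∀ x s, ConvexOn ℝ Set.univ (fun y => fmod x y s))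
    (hmodel_int : ∀ x y, Integrable (fun s => fmod x y s) μ)
    (hmodel_center : ∀ x, ∫ s, fmod x x s ∂μ = f x)
    (hmodel_under : ∀ x y, ∫ s, fmod x y s ∂μ ≤ f y)
    -- D1: sample-dependent Lipschitz continuity
    (hLip_meas : ∀ x, Measurable (Lip x))
    (hD1 : ∀ x y z s, fmod x z s - fmod x y s ≤ Lip x s * ‖z - y‖)
    -- D2: reference Lipschitz continuity
    (hLip_sq_int : ∀ x, Integrable (fun s => Lip x s ^ 2) μ)
    -- an optimal solution
    (xstar : EuclideanSpace ℝ (Fin n))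
    -- the current point and the stochastic one-step update
    (x : EuclideanSpace ℝ (Fin n)) (xplus : S → EuclideanSpace ℝ (Fin n))
    (hupdate : ∀ s y,
      fmod x (xplus s) s + w (xplus s) + γ / 2 * ‖xplus s - x‖ ^ 2
        ≤ fmod x y s + w y + γ / 2 * ‖y - x‖ ^ 2)
    (hint : Integrable (fun s => ‖xplus s - xstar‖ ^ 2) μ) :
    ∫ s, ‖xplus s - xstar‖ ^ 2 ∂μ
      ≤ ‖x - xstar‖ ^ 2 - 2 / γ * (ψ x - ψ xstar)
        + ∫ s, (Lip x s + Lw) ^ 2 / γ ^ 2 ∂μ := by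
  have hstep : ∀ s, ‖xplus s - xstar‖ ^ 2 ≤ ‖x - xstar‖ ^ 2
      + 2 / γ * ((fmod x xstar s + w xstar) - (fmod x x s + w x))
      + (Lip x s + Lw) ^ 2 / γ ^ 2 := by
    intro s
    refine norm_sub_sq_le_of_isMinOn_prox ((hmodel_conv x s).add hw_conv) hγ
      (fun y _ ↦ hupdate s y) ?_ xstar
    simp only [Pi.add_apply]
    rw [norm_sub_rev]
    linarith [hD1 x (xplus s) x s, le_of_abs_le (hw_lip x (xplus s))]
  have hmodel_gap : Integrable (fun s ↦ fmod x xstar s - fmod x x s) μ :=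
    (hmodel_int x xstar).sub (hmodel_int x x)
  have hLip_term : Integrable (fun s ↦ (Lip x s + Lw) ^ 2 / γ ^ 2) μ :=
    (integrable_add_const_sq (hLip_meas x).aestronglyMeasurable (hLip_sq_int x) Lw).div_const _
  have hrandom : Integrable
      (fun s ↦ 2 / γ * (fmod x xstar s - fmod x x s) + (Lip x s + Lw) ^ 2 / γ ^ 2) μ :=
    (hmodel_gap.const_mul _).add hLip_term
  calc ∫ s, ‖xplus s - xstar‖ ^ 2 ∂μ
      ≤ ∫ s, (‖x - xstar‖ ^ 2 + 2 / γ * (w xstar - w x)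
          + (2 / γ * (fmod x xstar s - fmod x x s) + (Lip x s + Lw) ^ 2 / γ ^ 2)) ∂μ :=
        integral_mono hint ((integrable_const _).add hrandom)
          fun s ↦ by linarith [hstep s]
    _ = ‖x - xstar‖ ^ 2 + 2 / γ * (w xstar - w x)
          + (2 / γ * (∫ s, fmod x xstar s ∂μ - f x) + ∫ s, (Lip x s + Lw) ^ 2 / γ ^ 2 ∂μ) := by
        rw [integral_add (integrable_const _) hrandom,
          integral_add (hmodel_gap.const_mul _) hLip_term, integral_const_mul,
          integral_sub (hmodel_int x xstar) (hmodel_int x x), hmodel_center, integral_const]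
        simp
    _ ≤ _ := by
        rw [hψdef x, hψdef xstar]
        have := mul_le_mul_of_nonneg_left (hmodel_under x xstar) (by positivity : 0 ≤ 2 / γ)
        linarith

/-- **Lemma D.4** (one-step contraction for convex stochastic optimization under unknown,
sample-dependent Lipschitz continuity, assumptions D1–D2).  For deterministic `γ > 0`
(independent of the sample) and `x⁺(ξ)` the minimizer of the regularized model at `x`,
`E_ξ[‖x⁺(ξ) - x*‖²] ≤ ‖x - x*‖² - (2/γ)[ψ(x) - ψ(x*)] + E_ξ[(Lip(x,ξ) + L_ω)²/γ²]`. -/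
theorem convex_one_step_unknown_lipschitz
    {n : ℕ} {S : Type*} [MeasurableSpace S] (μ : Measure S) [IsProbabilityMeasure μ]
    (f w ψ : EuclideanSpace ℝ (Fin n) → ℝ)
    (fmod : EuclideanSpace ℝ (Fin n) → EuclideanSpace ℝ (Fin n) → S → ℝ)
    (Lip : EuclideanSpace ℝ (Fin n) → S → ℝ) (γ Lw σ : ℝ)
    -- basic parameter assumptions
    (hγ : 0 < γ) (hLw : 0 ≤ Lw) (hσ : 0 ≤ σ)
    -- convex composite objective
    (hψdef : ∀ x, ψ x = f x + w x)
    (hf_conv : ConvexOn ℝ Set.univ f)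
    (hw_conv : ConvexOn ℝ Set.univ w)
    (hw_lip : ∀ x y, |w x - w y| ≤ Lw * ‖x - y‖)
    -- properties of the stochastic model (with τ = 0)
    (hmodel_conv : ∀ x s, ConvexOn ℝ Set.univ (fun y => fmod x y s))
    (hmodel_int : ∀ x y, Integrable (fun s => fmod x y s) μ)
    (hmodel_center : ∀ x, ∫ s, fmod x x s ∂μ = f x)
    (hmodel_under : ∀ x y, ∫ s, fmod x y s ∂μ ≤ f y)
    -- D1: sample-dependent Lipschitz continuity
    (hLip_nonneg : ∀ x s, 0 ≤ Lip x s)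
    (hLip_meas : ∀ x, Measurable (Lip x))
    (hD1 : ∀ x y z s, fmod x z s - fmod x y s ≤ Lip x s * ‖z - y‖)
    -- D2: reference Lipschitz continuity
    (hLip_sq_int : ∀ x, Integrable (fun s => Lip x s ^ 2) μ)
    (hD2 : ∀ x, ∫ s, ∫ s', |Lip x s - Lip x s'| ^ 2 ∂μ ∂μ ≤ σ ^ 2)
    -- an optimal solution
    (xstar : EuclideanSpace ℝ (Fin n)) (hxstar : ∀ y, ψ xstar ≤ ψ y)
    -- the current point and the stochastic one-step update
    (x : EuclideanSpace ℝ (Fin n)) (xplus : S → EuclideanSpace ℝ (Fin n))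
    (hupdate : ∀ s y,
      fmod x (xplus s) s + w (xplus s) + γ / 2 * ‖xplus s - x‖ ^ 2
        ≤ fmod x y s + w y + γ / 2 * ‖y - x‖ ^ 2)
    (hint : Integrable (fun s => ‖xplus s - xstar‖ ^ 2) μ) :
    ∫ s, ‖xplus s - xstar‖ ^ 2 ∂μ
      ≤ ‖x - xstar‖ ^ 2 - 2 / γ * (ψ x - ψ xstar)
        + ∫ s, (Lip x s + Lw) ^ 2 / γ ^ 2 ∂μ :=
  convex_one_step_unknown_lipschitz_general μ f w ψ fmod Lip γ Lw hγ hψdef hw_conv hw_lip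
    hmodel_conv hmodel_int hmodel_center hmodel_under hLip_meas hD1 hLip_sq_int xstar x xplus
    hupdate hint
end
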